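/- A partition λ is a P-position of RIT under normal play if and only if the nim-sum (λ₁ - λ₂) ⊕ (λ₃ - λ₄) ⊕ ... ⊕ (λ_{2⌈r/2⌉-1} - λ_{2⌈r/2⌉}) equals 0. -/

import Mathlib

/-- The `j`-th part (0-indexed) of a partition given as a list, `0` beyond the end. -/
def part (l : List ℕ) (j : ℕ) : ℕ := l.getD j 0

/-- A partition: a nonincreasing list of positive integers. -/
def IsPartition (l : List ℕ) : Prop :=
  l.Chain' (· ≥ ·) ∧ ∀ x ∈ l, 0 < x

/-- RIT move: replace the part at (0-indexed) position `i` by a smaller value `v`,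
keeping the sequence nonincreasing, then drop the (trailing) zeros. -/
def RitMove (l l' : List ℕ) : Prop :=
  ∃ i v, i < l.length ∧ v < part l i ∧ (l.set i v).Chain' (· ≥ ·) ∧
    l' = (l.set i v).filter (fun x => x ≠ 0)

/-- RIT move on an odd-numbered row (1-indexed), i.e. an even 0-indexed position. -/
def RitMoveOdd (l l' : List ℕ) : Prop :=
  ∃ i v, i < l.length ∧ i % 2 = 0 ∧ v < part l i ∧ (l.set i v).Chain' (· ≥ ·) ∧
    l' = (l.set i v).filter (fun x => x ≠ 0)

/-- RIT move on an even-numbered row (1-indexed), i.e. an odd 0-indexed position. -/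
def RitMoveEven (l l' : List ℕ) : Prop :=
  ∃ i v, i < l.length ∧ i % 2 = 1 ∧ v < part l i ∧ (l.set i v).Chain' (· ≥ ·) ∧
    l' = (l.set i v).filter (fun x => x ≠ 0)

/-- `core λ = (λ₂, λ₂, λ₄, λ₄, …)` (1-indexed parts), as a `0`-padded sequence. -/
def core (l : List ℕ) : ℕ → ℕ := fun j => part l (2 * (j / 2) + 1)

/-- `rem λ = (λ₁ - λ₂, λ₃ - λ₄, …)` (1-indexed parts), as a `0`-padded sequence. -/
def rem (l : List ℕ) : ℕ → ℕ := fun i => part l (2 * i) - part l (2 * i + 1)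

/-- A Nim move strictly decreases exactly one coordinate. -/
def NimMove (p q : ℕ → ℕ) : Prop := ∃ i, q i < p i ∧ ∀ j, j ≠ i → q j = p j

/-- The nim-sum (bitwise XOR) of the remnant of `l`:
`(λ₁ - λ₂) ⊕ (λ₃ - λ₄) ⊕ ⋯ ⊕ (λ_{2⌈r/2⌉-1} - λ_{2⌈r/2⌉})`. -/
def nimSum (l : List ℕ) : ℕ :=
  (List.ofFn (fun i : Fin ((l.length + 1) / 2) => rem l i)).foldr (· ^^^ ·) 0

/-- The minimal excludant of a set of naturals. -/
noncomputable def mexOf (S : Set ℕ) : ℕ := sInf {n | n ∉ S}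

/-- `G` is the (normal play) Sprague-Grundy function of RIT. -/
def IsRitGrundy (G : List ℕ → ℕ) : Prop :=
  ∀ l, IsPartition l → G l = mexOf {n | ∃ l', RitMove l l' ∧ G l' = n}

/-- `G` is the misère Grundy function of RIT (value `1` at the terminal position). -/
def IsRitMisereGrundy (G : List ℕ → ℕ) : Prop :=
  G [] = 1 ∧ ∀ l, IsPartition l → l ≠ [] →
    G l = mexOf {n | ∃ l', RitMove l l' ∧ G l' = n}

/-- `G` is the misère Grundy function of Nim on `0`-padded sequences of heaps. -/
def IsNimMisereGrundy (G : (ℕ → ℕ) → ℕ) : Prop :=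
  (∀ p : ℕ → ℕ, (∀ i, p i = 0) → G p = 1) ∧
  (∀ p : ℕ → ℕ, (Function.support p).Finite → (∃ i, p i ≠ 0) →
    G p = mexOf {n | ∃ q, NimMove p q ∧ G q = n})

/-- `P` is the set of P-positions of RIT under normal play. -/
def IsRitP (P : List ℕ → Prop) : Prop :=
  ∀ l, IsPartition l → (P l ↔ ∀ l', RitMove l l' → ¬ P l')

/-! A move at (0-indexed) row `i` changes the remnant `rem λ` in coordinate `i / 2` only, and
always changes it: lowering an even row lowers that coordinate, lowering an odd row raises it.
Hence no move preserves the nim-sum, so from nim-sum `0` every move leads to a nonzero nim-sum,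
while from a nonzero nim-sum Bouton's winning Nim move is realised by lowering an even row.
Thus `nimSum λ = 0` satisfies the recursion defining P-positions, and since every move lowers
`λ.sum`, that recursion has only one solution. -/

theorem WellFounded.iff_of_iff_forall_not {α : Type*} {r : α → α → Prop} (hr : WellFounded r)
    {S P Q : α → Prop} (hS : ∀ a b, r b a → S a → S b)
    (hP : ∀ a, S a → (P a ↔ ∀ b, r b a → ¬ P b))
    (hQ : ∀ a, S a → (Q a ↔ ∀ b, r b a → ¬ Q b)) {a : α} (ha : S a) : P a ↔ Q a := by
  induction a using hr.induction with
  | _ a ih =>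
    rw [hP a ha, hQ a ha]
    exact forall₂_congr fun b hb => not_congr (ih b hb (hS a b hb ha))


def xorPrefix (g : ℕ → ℕ) : ℕ → ℕ
  | 0 => 0
  | n + 1 => xorPrefix g n ^^^ g n

theorem foldr_xor_eq_foldr_xor_zero_xor (l : List ℕ) (b : ℕ) :
    l.foldr (· ^^^ ·) b = l.foldr (· ^^^ ·) 0 ^^^ b := by
  induction l with
  | nil => simp
  | cons a t ih => simp only [List.foldr_cons, ih, Nat.xor_assoc]

theorem foldr_xor_ofFn (g : ℕ → ℕ) (n : ℕ) :
    (List.ofFn fun i : Fin n => g i).foldr (· ^^^ ·) 0 = xorPrefix g n := by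
  induction n with
  | zero => rfl
  | succ n ih =>
    rw [List.ofFn_succ', List.concat_eq_append, List.foldr_append,
      foldr_xor_eq_foldr_xor_zero_xor]
    simp [ih, xorPrefix]

theorem xorPrefix_eq_of_le {g : ℕ → ℕ} {n m : ℕ} (hg : ∀ i ≥ n, g i = 0) (hnm : n ≤ m) :
    xorPrefix g m = xorPrefix g n := by
  induction m, hnm using Nat.le_induction with
  | base => rfl
  | succ m hnm ih => rw [xorPrefix, ih, hg m hnm, Nat.xor_zero]

theorem xorPrefix_update_of_le (g : ℕ → ℕ) {k n : ℕ} (a : ℕ) (hn : n ≤ k) :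
    xorPrefix (Function.update g k a) n = xorPrefix g n := by
  induction n with
  | zero => rfl
  | succ n ih => rw [xorPrefix, xorPrefix, ih (by omega), Function.update_of_ne (by omega)]

theorem xorPrefix_update (g : ℕ → ℕ) {k n : ℕ} (a : ℕ) (hk : k < n) :
    xorPrefix (Function.update g k a) n = xorPrefix g n ^^^ g k ^^^ a := by
  induction n, hk using Nat.le_induction with
  | base =>
    rw [xorPrefix, xorPrefix, xorPrefix_update_of_le g a le_rfl, Function.update_self,
      xor_cancel_right]
  | succ n hkn ih =>
    rw [xorPrefix, xorPrefix, ih, Function.update_of_ne (by omega)]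
    ac_rfl

/-- Bouton's lemma, in a form strong enough to be proved by induction. -/
theorem exists_xor_xorPrefix_xor_lt {g : ℕ → ℕ} {n a : ℕ} (ha : a < xorPrefix g n) :
    ∃ k < n, a ^^^ xorPrefix g n ^^^ g k < g k := by
  induction n generalizing a with
  | zero => simp [xorPrefix] at ha
  | succ n ih =>
    rcases Nat.lt_xor_cases ha with h | h
    · obtain ⟨k, hk, hlt⟩ := ih h
      refine ⟨k, by omega, ?_⟩
      rw [xorPrefix]
      convert hlt using 1
      ac_rfl
    · refine ⟨n, by omega, ?_⟩
      rwa [xorPrefix, ← Nat.xor_assoc, xor_cancel_right]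

theorem part_eq_zero_of_length_le {l : List ℕ} {j : ℕ} (h : l.length ≤ j) : part l j = 0 :=
  List.getD_eq_default _ _ h

theorem part_eq_getElem {l : List ℕ} {j : ℕ} (h : j < l.length) : part l j = l[j] :=
  List.getD_eq_getElem _ _ h

theorem lt_length_of_part_ne_zero {l : List ℕ} {j : ℕ} (h : part l j ≠ 0) : j < l.length := by
  by_contra hj
  exact h (part_eq_zero_of_length_le (by omega))

theorem isChain_ge_iff_antitone_part {l : List ℕ} :
    l.IsChain (· ≥ ·) ↔ Antitone (part l) := by
  rw [List.isChain_iff_getElem]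
  constructor
  · refine fun h => antitone_nat_of_succ_le fun j => ?_
    by_cases hj : j + 1 < l.length
    · rw [part_eq_getElem hj, part_eq_getElem (by omega)]
      exact h j hj
    · rw [part_eq_zero_of_length_le (by omega)]
      exact Nat.zero_le _
  · intro h j hj
    rw [← part_eq_getElem hj, ← part_eq_getElem (by omega)]
    exact h (Nat.le_succ j)

theorem part_set {l : List ℕ} {i : ℕ} (hi : i < l.length) (v : ℕ) :
    part (l.set i v) = Function.update (part l) i v := by
  funext j
  rcases eq_or_ne j i with rfl | hj
  · simp [part, hi]
  · simp [part, List.getD_eq_getElem?_getD, hj, Ne.symm hj]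

theorem part_filter_ne_zero {l : List ℕ} (hl : Antitone (part l)) :
    part (l.filter (fun x => x ≠ 0)) = part l := by
  induction l with
  | nil => rfl
  | cons a t ih =>
    have ht : Antitone (part t) := fun i j hij => hl (Nat.succ_le_succ hij)
    funext j
    by_cases ha : a = 0
    · subst ha
      have hzero : ∀ j, part (0 :: t) j = 0 := fun j => Nat.le_zero.mp (hl (Nat.zero_le j))
      rw [hzero, List.filter_cons_of_neg (by simp), ih ht]
      exact hzero (j + 1)
    · rw [List.filter_cons_of_pos (by simpa using ha)]
      cases j with
      | zero => rfl
      | succ j => exact congrFun (ih ht) j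

theorem antitone_update {f : ℕ → ℕ} (hf : Antitone f) {i v : ℕ} (hv : v ≤ f i)
    (hv' : f (i + 1) ≤ v) : Antitone (Function.update f i v) := by
  refine antitone_nat_of_succ_le fun j => ?_
  rcases lt_trichotomy j i with hj | rfl | hj
  · rcases eq_or_ne (j + 1) i with rfl | hj'
    · simpa using hv.trans (hf (Nat.le_succ j))
    · rw [Function.update_of_ne hj', Function.update_of_ne hj.ne]
      exact hf (Nat.le_succ j)
  · simpa using hv'
  · rw [Function.update_of_ne (by omega), Function.update_of_ne hj.ne']
    exact hf (Nat.le_succ j)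

theorem sum_set_lt {l : List ℕ} {i v : ℕ} (hv : v < part l i) : (l.set i v).sum < l.sum := by
  induction l generalizing i with
  | nil => simp [part] at hv
  | cons a t ih =>
    cases i with
    | zero => simpa [part] using hv
    | succ i => simpa using ih hv

theorem IsPartition.antitone_part {l : List ℕ} (hl : IsPartition l) : Antitone (part l) :=
  isChain_ge_iff_antitone_part.mp hl.1

namespace RitMove

variable {l l' : List ℕ}

theorem exists_part_eq_update (h : RitMove l l') :
    ∃ i v, i < l.length ∧ v < part l i ∧ Antitone (part l') ∧
      part l' = Function.update (part l) i v := by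
  obtain ⟨i, v, hi, hv, hc, rfl⟩ := h
  have hset : Antitone (part (l.set i v)) := isChain_ge_iff_antitone_part.mp hc
  rw [part_filter_ne_zero hset]
  exact ⟨i, v, hi, hv, hset, part_set hi v⟩

theorem isPartition (h : RitMove l l') : IsPartition l' := by
  obtain ⟨-, -, -, -, hl', -⟩ := h.exists_part_eq_update
  refine ⟨isChain_ge_iff_antitone_part.mpr hl', fun x hx => ?_⟩
  obtain ⟨i, v, -, -, -, rfl⟩ := h
  simpa [Nat.pos_iff_ne_zero] using (List.mem_filter.mp hx).2

theorem sum_lt (h : RitMove l l') : l'.sum < l.sum := by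
  obtain ⟨i, v, -, hv, -, rfl⟩ := h
  exact (List.filter_sublist.sum_le_sum fun x _ => Nat.zero_le x).trans_lt (sum_set_lt hv)

end RitMove

theorem wellFounded_flip_ritMove : WellFounded (flip RitMove) :=
  Subrelation.wf (fun h => RitMove.sum_lt h) (measure List.sum).wf

theorem exists_ritMove_part_eq_update {l : List ℕ} (hl : IsPartition l) {i v : ℕ}
    (hv : v < part l i) (hv' : part l (i + 1) ≤ v) :
    ∃ l', RitMove l l' ∧ part l' = Function.update (part l) i v := by
  have hi : i < l.length := lt_length_of_part_ne_zero (by omega)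
  have hc : (l.set i v).IsChain (· ≥ ·) := by
    rw [isChain_ge_iff_antitone_part, part_set hi]
    exact antitone_update hl.antitone_part hv.le hv'
  refine ⟨_, ⟨i, v, hi, hv, hc, rfl⟩, ?_⟩
  rw [part_filter_ne_zero (isChain_ge_iff_antitone_part.mp hc), part_set hi]

theorem rem_eq_update {l l' : List ℕ} {i v : ℕ} (h : part l' = Function.update (part l) i v) :
    rem l' = Function.update (rem l) (i / 2) (rem l' (i / 2)) := by
  funext j
  rcases eq_or_ne j (i / 2) with rfl | hj
  · simp
  · simp only [rem, h, Function.update_of_ne hj]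
    rw [Function.update_of_ne (by omega), Function.update_of_ne (by omega)]

theorem rem_eq_zero_of_le {l : List ℕ} {j : ℕ} (hj : (l.length + 1) / 2 ≤ j) : rem l j = 0 := by
  simp [rem, part_eq_zero_of_length_le (show l.length ≤ 2 * j by omega)]

theorem nimSum_eq_xorPrefix (l : List ℕ) {n : ℕ} (hn : (l.length + 1) / 2 ≤ n) :
    nimSum l = xorPrefix (rem l) n := by
  rw [nimSum, foldr_xor_ofFn, xorPrefix_eq_of_le (fun j hj => rem_eq_zero_of_le hj) hn]

theorem nimSum_eq_of_part_eq_update {l l' : List ℕ} {i v : ℕ} (hi : i < l.length)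
    (h : part l' = Function.update (part l) i v) :
    nimSum l' = nimSum l ^^^ rem l (i / 2) ^^^ rem l' (i / 2) := by
  set n := l.length + l'.length
  rw [nimSum_eq_xorPrefix l (n := n) (by omega), nimSum_eq_xorPrefix l' (n := n) (by omega),
    rem_eq_update h, xorPrefix_update _ _ (by omega), Function.update_self]

theorem rem_ne_of_part_eq_update {l l' : List ℕ} {i v : ℕ} (hl : Antitone (part l))
    (hl' : Antitone (part l')) (hv : v < part l i)
    (h : part l' = Function.update (part l) i v) : rem l' (i / 2) ≠ rem l (i / 2) := by
  rcases Nat.even_or_odd' i with ⟨k, rfl | rfl⟩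
  · have hlow : part l (2 * k + 1) ≤ v := by
      simpa [h] using hl' (Nat.le_succ (2 * k))
    rw [show 2 * k / 2 = k by omega]
    simp only [rem, h, Function.update_self,
      Function.update_of_ne (show 2 * k + 1 ≠ 2 * k by omega)]
    omega
  · have hup : part l (2 * k + 1) ≤ part l (2 * k) := hl (Nat.le_succ (2 * k))
    rw [show (2 * k + 1) / 2 = k by omega]
    simp only [rem, h, Function.update_self,
      Function.update_of_ne (show 2 * k ≠ 2 * k + 1 by omega)]
    omega

theorem RitMove.nimSum_ne {l l' : List ℕ} (hl : IsPartition l) (h : RitMove l l') :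
    nimSum l' ≠ nimSum l := by
  obtain ⟨i, v, hi, hv, hl', hpart⟩ := h.exists_part_eq_update
  have hrem := rem_ne_of_part_eq_update hl.antitone_part hl' hv hpart
  rw [nimSum_eq_of_part_eq_update hi hpart, Nat.xor_assoc]
  intro heq
  exact hrem (Nat.xor_eq_zero_iff.mp (by simpa using heq)).symm

theorem exists_ritMove_nimSum_eq_zero {l : List ℕ} (hl : IsPartition l) (h : nimSum l ≠ 0) :
    ∃ l', RitMove l l' ∧ nimSum l' = 0 := by
  have hx : nimSum l = xorPrefix (rem l) ((l.length + 1) / 2) := nimSum_eq_xorPrefix l le_rfl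
  obtain ⟨k, -, hk⟩ := exists_xor_xorPrefix_xor_lt (a := 0) (Nat.pos_of_ne_zero (hx ▸ h))
  rw [Nat.zero_xor, ← hx, Nat.xor_comm] at hk
  set w := rem l k ^^^ nimSum l with hw
  have hk' : w < part l (2 * k) - part l (2 * k + 1) := hk
  -- lowering row `2k` to `part l (2k+1) + w` turns its remnant into `w`
  obtain ⟨l', hmove, hpart⟩ := exists_ritMove_part_eq_update hl
    (v := part l (2 * k + 1) + w) (by omega) (Nat.le_add_right _ _)
  have hi : 2 * k < l.length := lt_length_of_part_ne_zero (by omega)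
  have hrem : rem l' k = w := by
    simp only [rem, hpart, Function.update_self,
      Function.update_of_ne (show 2 * k + 1 ≠ 2 * k by omega)]
    omega
  refine ⟨l', hmove, ?_⟩
  rw [nimSum_eq_of_part_eq_update hi hpart, show 2 * k / 2 = k by omega, hrem, hw,
    Nat.xor_assoc, xor_cancel_left, Nat.xor_self]

theorem isRitP_nimSum_eq_zero : IsRitP (fun l => nimSum l = 0) := by
  refine fun l hl => ⟨fun h l' hmove => h ▸ hmove.nimSum_ne hl, fun h => ?_⟩
  by_contra hne
  obtain ⟨l', hmove, hl'⟩ := exists_ritMove_nimSum_eq_zero hl hne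
  exact h l' hmove hl'

theorem IsRitP.iff {P Q : List ℕ → Prop} (hP : IsRitP P) (hQ : IsRitP Q) {l : List ℕ}
    (hl : IsPartition l) : P l ↔ Q l :=
  wellFounded_flip_ritMove.iff_of_iff_forall_not (fun _ _ h _ => RitMove.isPartition h) hP hQ hl

/-- `λ` is a P-position of RIT under normal play iff the nim-sum of
its remnant is zero. -/
theorem stmt_7 (P : List ℕ → Prop) (hP : IsRitP P) (l : List ℕ)
    (hl : IsPartition l) : P l ↔ nimSum l = 0 :=
  hP.iff isRitP_nimSum_eq_zero hl
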